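/- The function h : (0,∞) → ℝ defined by h(x) = ln( Γ(x+1) / (√(2πx) · (x/e)^x) ) is strictly decreasing on (0,∞); that is, for all 0 < x₁ < x₂ one has h(x₁) > h(x₂). -/

import Mathlib

set_option maxHeartbeats 1000000

open Real

/-- `h(x) = ln( Γ(x+1) / (√(2πx)·(x/e)^x) )`. -/
noncomputable def stirlingH (x : ℝ) : ℝ :=
  Real.log (Real.Gamma (x + 1) / (Real.sqrt (2 * π * x) * (x / Real.exp 1) ^ x))

open Filter

lemma stirlingH_eq {x : ℝ} (hx : 0 < x) :
    stirlingH x = Real.log (Real.Gamma (x + 1)) - (1/2) * Real.log (2 * π * x)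
      - x * Real.log x + x := by
  have h2πx : 0 < 2 * π * x := by positivity
  have hΓ : 0 < Real.Gamma (x + 1) := Real.Gamma_pos_of_pos (by linarith)
  have hb : 0 < x / Real.exp 1 := by positivity
  rw [stirlingH, Real.log_div hΓ.ne' (by positivity), Real.log_mul (by positivity) (by positivity),
    Real.log_sqrt h2πx.le, Real.log_rpow hb, Real.log_div hx.ne' (Real.exp_pos 1).ne',
    Real.log_exp]
  ring

noncomputable def sg (x : ℝ) : ℝ := (x + 1/2) * (Real.log (x + 1) - Real.log x) - 1

lemma stirlingH_step {x : ℝ} (hx : 0 < x) : stirlingH x = sg x + stirlingH (x + 1) := by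
  have hx1 : (0:ℝ) < x + 1 := by linarith
  rw [stirlingH_eq hx, stirlingH_eq hx1]
  have hΓ : Real.Gamma (x + 1 + 1) = (x + 1) * Real.Gamma (x + 1) := Real.Gamma_add_one (by positivity)
  rw [hΓ, Real.log_mul hx1.ne' (Real.Gamma_pos_of_pos (by linarith)).ne']
  have h1 : Real.log (2 * π * (x+1)) = Real.log (2 * π * x) + (Real.log (x+1) - Real.log x) := by
    rw [Real.log_mul (by positivity) hx1.ne', Real.log_mul (by positivity) hx.ne']
    ring
  rw [h1, sg]; ring

noncomputable def sF (x : ℝ) : ℝ := 1/(2*x) + 1/(2*(x+1)) - Real.log (x+1) + Real.log x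

lemma hasDerivAt_sF {x : ℝ} (hx : 0 < x) :
    HasDerivAt sF ((0 * (2*x) - 1 * 2) / (2*x)^2 + (0 * (2*(x+1)) - 1 * 2) / (2*(x+1))^2
      - 1/(x+1) + 1/x) x := by
  have hg1 : HasDerivAt (fun y : ℝ => 2*y) 2 x := by
    simpa using (hasDerivAt_id x).const_mul 2
  have hg2 : HasDerivAt (fun y : ℝ => 2*(y+1)) 2 x := by
    simpa using ((hasDerivAt_id x).add_const 1).const_mul 2
  have h1 : HasDerivAt (fun y : ℝ => 1/(2*y)) ((0 * (2*x) - 1 * 2) / (2*x)^2) x :=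
    (hasDerivAt_const x 1).div hg1 (by positivity)
  have h2 : HasDerivAt (fun y : ℝ => 1/(2*(y+1))) ((0 * (2*(x+1)) - 1 * 2) / (2*(x+1))^2) x :=
    (hasDerivAt_const x 1).div hg2 (by positivity)
  have h3 : HasDerivAt (fun y : ℝ => Real.log (y+1)) (1/(x+1)) x := by
    simpa [Function.comp_def] using (Real.hasDerivAt_log (by positivity : x + 1 ≠ 0)).comp x
      ((hasDerivAt_id x).add_const 1)
  have h4 : HasDerivAt Real.log (1/x) x := by
    simpa [one_div] using Real.hasDerivAt_log hx.ne'
  exact ((h1.add h2).sub h3).add h4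

lemma sF_deriv_neg {x : ℝ} (hx : 0 < x) :
    (0 * (2*x) - 1 * 2) / (2*x)^2 + (0 * (2*(x+1)) - 1 * 2) / (2*(x+1))^2
      - 1/(x+1) + 1/x < 0 := by
  have h : (0 * (2*x) - 1 * 2) / (2*x)^2 + (0 * (2*(x+1)) - 1 * 2) / (2*(x+1))^2
      - 1/(x+1) + 1/x = -(1/(2*x^2*(x+1)^2)) := by
    field_simp
    ring
  rw [h]
  have : 0 < 1/(2*x^2*(x+1)^2) := by positivity
  linarith

lemma sF_strictAnti : StrictAntiOn sF (Set.Ioi 0) := by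
  have hc : ContinuousOn sF (Set.Ioi 0) := fun x hx =>
    (hasDerivAt_sF hx).continuousAt.continuousWithinAt
  refine strictAntiOn_of_deriv_neg (convex_Ioi 0) hc ?_
  intro x hx
  rw [interior_Ioi] at hx
  rw [(hasDerivAt_sF hx).deriv]
  exact sF_deriv_neg hx

lemma sF_tendsto : Tendsto sF atTop (nhds 0) := by
  have h1 : Tendsto (fun x : ℝ => 1/(2*x)) atTop (nhds 0) := by
    apply Tendsto.div_atTop tendsto_const_nhds
    exact Tendsto.const_mul_atTop two_pos tendsto_id
  have h2 : Tendsto (fun x : ℝ => 1/(2*(x+1))) atTop (nhds 0) := by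
    apply Tendsto.div_atTop tendsto_const_nhds
    exact Tendsto.const_mul_atTop two_pos (tendsto_atTop_add_const_right _ 1 tendsto_id)
  have h3 : Tendsto (fun x : ℝ => Real.log (x+1) - Real.log x) atTop (nhds 0) := by
    have key : ∀ᶠ x : ℝ in atTop, Real.log (x+1) - Real.log x = Real.log ((x+1)/x) := by
      filter_upwards [eventually_gt_atTop 0] with x hx
      rw [Real.log_div (by positivity) hx.ne']
    rw [tendsto_congr' key]
    have hlim : Tendsto (fun x : ℝ => (x+1)/x) atTop (nhds 1) := by
      have : ∀ᶠ x : ℝ in atTop, (x+1)/x = 1 + 1/x := by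
        filter_upwards [eventually_gt_atTop 0] with x hx
        field_simp
      rw [tendsto_congr' this]
      have hz : Tendsto (fun x : ℝ => 1/x) atTop (nhds 0) :=
        tendsto_const_nhds.div_atTop tendsto_id
      have : Tendsto (fun x : ℝ => 1 + 1/x) atTop (nhds (1 + 0)) :=
        tendsto_const_nhds.add hz
      simpa using this
    have := (Real.continuousAt_log one_ne_zero).tendsto.comp hlim
    simpa [Function.comp_def] using this
  have := (h1.add h2).sub h3
  simp only [add_zero, sub_zero, zero_add] at this
  convert this using 2 with x
  simp [sF]; ring

lemma sF_pos {x : ℝ} (hx : 0 < x) : 0 < sF x := by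
  have hge : ∀ y : ℝ, 0 < y → 0 ≤ sF y := by
    intro y hy
    refine le_of_tendsto sF_tendsto ?_
    filter_upwards [eventually_ge_atTop y, eventually_gt_atTop (0:ℝ)] with z hz hz0
    rcases eq_or_lt_of_le hz with rfl | h
    · exact le_refl _
    · exact (sF_strictAnti hy hz0 h).le

  have := sF_strictAnti hx (by linarith : (0:ℝ) < x + 1) (by linarith)
  have := hge (x+1) (by linarith)
  linarith

lemma hasDerivAt_sg {x : ℝ} (hx : 0 < x) : HasDerivAt sg (-sF x) x := by
  have h3 : HasDerivAt (fun y : ℝ => Real.log (y+1)) (1/(x+1)) x := by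
    simpa [Function.comp_def] using (Real.hasDerivAt_log (by positivity : x + 1 ≠ 0)).comp x
      ((hasDerivAt_id x).add_const 1)
  have h4 : HasDerivAt Real.log (1/x) x := by
    simpa [one_div] using Real.hasDerivAt_log hx.ne'
  have hid : HasDerivAt (fun y : ℝ => y + 1/2) 1 x := (hasDerivAt_id x).add_const _
  have := hid.mul (h3.sub h4)
  have heq : HasDerivAt (fun y : ℝ => (y + 1/2) * (Real.log (y+1) - Real.log y) - 1)
      (1 * (Real.log (x+1) - Real.log x) + (x + 1/2) * (1/(x+1) - 1/x)) x := this.sub_const 1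
  convert heq using 1
  · rfl
  rw [sF]
  field_simp
  ring

lemma sg_strictAnti : StrictAntiOn sg (Set.Ioi 0) := by
  have hc : ContinuousOn sg (Set.Ioi 0) := fun x hx =>
    (hasDerivAt_sg hx).continuousAt.continuousWithinAt
  refine strictAntiOn_of_deriv_neg (convex_Ioi 0) hc ?_
  intro x hx
  rw [interior_Ioi] at hx
  rw [(hasDerivAt_sg hx).deriv]
  simpa using sF_pos hx

lemma log_Gamma_succ {z : ℝ} (hz : 0 < z) :
    Real.log (Real.Gamma (z + 1)) = Real.log z + Real.log (Real.Gamma z) := by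
  rw [Real.Gamma_add_one hz.ne', Real.log_mul hz.ne' (Real.Gamma_pos_of_pos hz).ne']

lemma logGamma_upper {n t : ℝ} (hn : 1 ≤ n) (ht0 : 0 ≤ t) (ht1 : t ≤ 1) :
    Real.log (Real.Gamma (n + t + 1)) - Real.log (Real.Gamma (n + 1)) ≤
      t * Real.log (n + 1) := by
  have h1 : (n+1 : ℝ) ∈ Set.Ioi (0:ℝ) := by simp; linarith
  have h2 : (n+2 : ℝ) ∈ Set.Ioi (0:ℝ) := by simp; linarith
  have key := Real.convexOn_log_Gamma.2 h1 h2 (by linarith : (0:ℝ) ≤ 1 - t) ht0 (by ring)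
  simp only [smul_eq_mul, Function.comp_apply] at key
  have harg : (1-t) * (n+1) + t * (n+2) = n + t + 1 := by ring
  rw [harg] at key
  have hstep : Real.log (Real.Gamma (n+2)) =
      Real.log (n+1) + Real.log (Real.Gamma (n+1)) := by
    have := log_Gamma_succ (by linarith : (0:ℝ) < n + 1)
    convert this using 3 <;> ring
  rw [hstep] at key
  nlinarith [key]

lemma logGamma_lower {n t : ℝ} (hn : 1 ≤ n) (ht0 : 0 ≤ t) (ht1 : t ≤ 1) :
    t * Real.log n ≤
      Real.log (Real.Gamma (n + t + 1)) - Real.log (Real.Gamma (n + 1)) := by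
  rcases eq_or_lt_of_le ht0 with rfl | ht
  · simp
  have hx : (n : ℝ) ∈ Set.Ioi (0:ℝ) := by simp; linarith
  have hz : (n + 1 + t : ℝ) ∈ Set.Ioi (0:ℝ) := by simp; linarith
  have key := Real.convexOn_log_Gamma.slope_mono_adjacent hx hz
      (by linarith : n < n + 1) (by linarith : n + 1 < n + 1 + t)
  simp only [Function.comp_apply] at key
  have e1 : n + 1 - n = (1:ℝ) := by ring
  have e2 : n + 1 + t - (n + 1) = t := by ring
  rw [e1, e2, div_one] at key
  have hstep : Real.log (Real.Gamma (n+1)) - Real.log (Real.Gamma n) = Real.log n := by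
    rw [log_Gamma_succ (by linarith : (0:ℝ) < n)]; ring
  rw [hstep] at key
  have harg : n + 1 + t = n + t + 1 := by ring
  rw [harg] at key
  rw [le_div_iff₀ ht] at key
  linarith [key]

lemma stirlingH_floor_bound {n t : ℝ} (hn : 1 ≤ n) (ht0 : 0 ≤ t) (ht1 : t < 1) :
    stirlingH (n + t) ≤ stirlingH n + 2/n ∧ stirlingH n - 2/n ≤ stirlingH (n + t) := by
  have hn0 : (0:ℝ) < n := by linarith
  set y := n + t with hy_def
  have hy0 : (0:ℝ) < y := by simp [hy_def]; linarith
  have hny : n ≤ y := by simp [hy_def]; linarith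
  have hyn1 : y ≤ n + 1 := by simp [hy_def]; linarith
  set Lr := Real.log y - Real.log n with hLr_def
  set D := Real.log (Real.Gamma (n + t + 1)) - Real.log (Real.Gamma (n + 1)) with hD_def
  set L1 := Real.log (n+1) - Real.log y with hL1_def
  clear_value y Lr D L1
  -- expansion of the difference
  have hΔ : stirlingH y - stirlingH n = D - (1/2)*Lr - (t * Real.log y + n * Lr) + t := by
    rw [stirlingH_eq hy0, stirlingH_eq hn0]
    have e1 : Real.log (2*π*y) = Real.log (2*π) + Real.log y := by
      rw [Real.log_mul (by positivity) hy0.ne']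
    have e2 : Real.log (2*π*n) = Real.log (2*π) + Real.log n := by
      rw [Real.log_mul (by positivity) hn0.ne']
    rw [e1, e2, hD_def, hLr_def, hy_def]
    ring
  -- basic log bounds
  have hLr0 : 0 ≤ Lr := by
    rw [hLr_def]; have := Real.log_le_log hn0 hny; linarith
  have hA2 : n * Lr ≤ t := by
    have h := Real.log_le_sub_one_of_pos (show (0:ℝ) < y/n by positivity)
    rw [Real.log_div hy0.ne' hn0.ne'] at h
    rw [hLr_def]
    have : n * (Real.log y - Real.log n) ≤ n * (y/n - 1) :=
      mul_le_mul_of_nonneg_left h hn0.le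
    have e : n * (y/n - 1) = t := by field_simp [hy_def]; linarith
    linarith [e ▸ this]
  have hA3 : t ≤ y * Lr := by
    have h := Real.one_sub_inv_le_log_of_pos (show (0:ℝ) < y/n by positivity)
    rw [Real.log_div hy0.ne' hn0.ne'] at h
    have hinv : (y/n)⁻¹ = n/y := by field_simp
    rw [hinv] at h
    rw [hLr_def]
    have : y * (1 - n/y) ≤ y * (Real.log y - Real.log n) :=
      mul_le_mul_of_nonneg_left h hy0.le
    have e : y * (1 - n/y) = t := by field_simp [hy_def]; linarith
    linarith [e ▸ this]
  have hL10 : 0 ≤ L1 := by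
    rw [hL1_def]; have := Real.log_le_log hy0 hyn1; linarith
  have hA1 : y * L1 ≤ 1 - t := by
    have h := Real.log_le_sub_one_of_pos (show (0:ℝ) < (n+1)/y by positivity)
    rw [Real.log_div (by positivity : (n+1:ℝ) ≠ 0) hy0.ne'] at h
    rw [hL1_def]
    have : y * (Real.log (n+1) - Real.log y) ≤ y * ((n+1)/y - 1) :=
      mul_le_mul_of_nonneg_left h hy0.le
    have e : y * ((n+1)/y - 1) = 1 - t := by field_simp [hy_def]; linarith
    linarith [e ▸ this]
  -- convexity bounds
  have hDup : D ≤ t * (Real.log y + L1) := by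
    have h := logGamma_upper hn ht0 ht1.le
    rw [← hD_def] at h
    rw [hL1_def]; linarith
  have hDlo : t * (Real.log y - Lr) ≤ D := by
    have h := logGamma_lower hn ht0 ht1.le
    rw [← hD_def] at h
    rw [hLr_def]; linarith
  have hB : n*t - n*(n*Lr) ≤ t^2 := by
    nlinarith [mul_le_mul_of_nonneg_left hA3 (mul_nonneg hn0.le hn0.le), hy0, hny,
      mul_nonneg (mul_nonneg hn0.le ht0) ht0]
  have hC : n*t*L1 ≤ t*(1-t) := by
    nlinarith [mul_le_mul_of_nonneg_left hA1 ht0, mul_nonneg (mul_nonneg ht0 ht0) hL10]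
  constructor
  · have key : n * (stirlingH y - stirlingH n) ≤ 2 := by
      rw [hΔ]
      have h1 := mul_le_mul_of_nonneg_left hDup hn0.le
      have h2 := mul_nonneg hn0.le hLr0
      nlinarith [h1, hB, hC, h2]
    have h2 : stirlingH y - stirlingH n ≤ 2/n := by
      rw [le_div_iff₀ hn0]; nlinarith [key]
    linarith
  · have key : -2 ≤ n * (stirlingH y - stirlingH n) := by
      rw [hΔ]
      nlinarith [mul_le_mul_of_nonneg_left hDlo hn0.le,
        mul_le_mul_of_nonneg_left hA2 ht0,
        mul_le_mul_of_nonneg_left hA2 hn0.le, hA2, sq_nonneg t, ht1.le, hn0]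
    have h2 : (-2)/n ≤ stirlingH y - stirlingH n := by
      rw [div_le_iff₀ hn0]; nlinarith [key]
    have e : (-2:ℝ)/n = -(2/n) := by ring
    rw [e] at h2
    linarith

lemma stirlingH_nat_eq {n : ℕ} (hn : 1 ≤ n) :
    stirlingH n = Real.log (Stirling.stirlingSeq n / Real.sqrt π) := by
  have hn0 : (0:ℝ) < n := by exact_mod_cast hn
  rw [stirlingH, Stirling.stirlingSeq]
  congr 1
  rw [Real.Gamma_nat_eq_factorial]
  have h1 : (2 * π * n : ℝ) = π * (2 * n) := by ring
  rw [h1, Real.sqrt_mul pi_pos.le]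
  have h2 : ((n:ℝ) / Real.exp 1) ^ (n:ℝ) = ((n:ℝ) / Real.exp 1) ^ n := by
    rw [Real.rpow_natCast]
  rw [h2]
  have hs2n : (0:ℝ) < Real.sqrt (2 * n) := Real.sqrt_pos.2 (by positivity)
  have hsπ : (0:ℝ) < Real.sqrt π := Real.sqrt_pos.2 pi_pos
  have hp : (0:ℝ) < ((n:ℝ) / Real.exp 1) ^ n := by positivity
  field_simp

lemma stirlingH_nat_tendsto : Tendsto (fun n : ℕ => stirlingH n) atTop (nhds 0) := by
  have hsπ : (0:ℝ) < Real.sqrt π := Real.sqrt_pos.2 pi_pos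
  have h1 : Tendsto (fun n : ℕ => Stirling.stirlingSeq n / Real.sqrt π) atTop
      (nhds (Real.sqrt π / Real.sqrt π)) :=
    Stirling.tendsto_stirlingSeq_sqrt_pi.div_const _
  rw [div_self hsπ.ne'] at h1
  have h2 := (Real.continuousAt_log one_ne_zero).tendsto.comp h1
  simp only [Function.comp_def, Real.log_one] at h2
  apply h2.congr'
  filter_upwards [eventually_ge_atTop 1] with n hn
  exact (stirlingH_nat_eq hn).symm

lemma stirlingH_tendsto : Tendsto stirlingH atTop (nhds 0) := by
  have hfloor : Tendsto (fun y : ℝ => ⌊y⌋₊) atTop atTop := tendsto_nat_floor_atTop (α := ℝ)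
  have hlo : Tendsto (fun y : ℝ => stirlingH (⌊y⌋₊ : ℝ) - 2/(⌊y⌋₊ : ℝ)) atTop (nhds 0) := by
    have h1 := stirlingH_nat_tendsto.comp hfloor
    have h2 : Tendsto (fun n : ℕ => 2/(n:ℝ)) atTop (nhds 0) := by
      exact Tendsto.div_atTop (tendsto_const_nhds : Tendsto (fun _ : ℕ => (2:ℝ)) atTop (nhds 2))
        (tendsto_natCast_atTop_atTop (R := ℝ))
    have := h1.sub (h2.comp hfloor)
    simpa using this
  have hhi : Tendsto (fun y : ℝ => stirlingH (⌊y⌋₊ : ℝ) + 2/(⌊y⌋₊ : ℝ)) atTop (nhds 0) := by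
    have h1 := stirlingH_nat_tendsto.comp hfloor
    have h2 : Tendsto (fun n : ℕ => 2/(n:ℝ)) atTop (nhds 0) := by
      exact Tendsto.div_atTop (tendsto_const_nhds : Tendsto (fun _ : ℕ => (2:ℝ)) atTop (nhds 2))
        (tendsto_natCast_atTop_atTop (R := ℝ))
    have := h1.add (h2.comp hfloor)
    simpa using this
  have hbnd : ∀ y : ℝ, 1 ≤ y →
      (stirlingH (⌊y⌋₊ : ℝ) - 2/(⌊y⌋₊ : ℝ) ≤ stirlingH y ∧
       stirlingH y ≤ stirlingH (⌊y⌋₊ : ℝ) + 2/(⌊y⌋₊ : ℝ)) := by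
    intro y hy
    have hn : (1:ℝ) ≤ (⌊y⌋₊ : ℝ) := by
      have : 1 ≤ ⌊y⌋₊ := Nat.le_floor (by exact_mod_cast hy)
      exact_mod_cast this
    have hfl : (⌊y⌋₊ : ℝ) ≤ y := Nat.floor_le (by linarith)
    have hfl1 : y < (⌊y⌋₊ : ℝ) + 1 := Nat.lt_floor_add_one y
    have ht0 : 0 ≤ y - (⌊y⌋₊ : ℝ) := by linarith
    have ht1 : y - (⌊y⌋₊ : ℝ) < 1 := by linarith
    have := stirlingH_floor_bound hn ht0 ht1
    have harg : (⌊y⌋₊ : ℝ) + (y - (⌊y⌋₊ : ℝ)) = y := by ring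
    rw [harg] at this
    exact ⟨this.2, this.1⟩
  refine tendsto_of_tendsto_of_tendsto_of_le_of_le' hlo hhi ?_ ?_
  · filter_upwards [eventually_ge_atTop (1:ℝ)] with y hy
    exact (hbnd y hy).1
  · filter_upwards [eventually_ge_atTop (1:ℝ)] with y hy
    exact (hbnd y hy).2

/-- `h` is strictly decreasing on `(0, ∞)`. -/
theorem stirlingH_strictAnti :
    ∀ x₁ x₂ : ℝ, 0 < x₁ → x₁ < x₂ → stirlingH x₁ > stirlingH x₂ := by
  intro x₁ x₂ hx₁ hlt
  have hx₂ : 0 < x₂ := hx₁.trans hlt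
  have hiter : ∀ N : ℕ,
      (sg x₁ - sg x₂) + (stirlingH (x₁ + ((N:ℝ)+1)) - stirlingH (x₂ + ((N:ℝ)+1)))
        ≤ stirlingH x₁ - stirlingH x₂ := by
    intro N
    induction N with
    | zero =>
      have h1 := stirlingH_step hx₁
      have h2 := stirlingH_step hx₂
      simp only [Nat.cast_zero, zero_add]
      linarith
    | succ n ih =>
      have hp1 : (0:ℝ) < x₁ + ((n:ℝ)+1) := by positivity
      have hp2 : (0:ℝ) < x₂ + ((n:ℝ)+1) := by positivity
      have h1 := stirlingH_step hp1
      have h2 := stirlingH_step hp2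
      have hsg : sg (x₂ + ((n:ℝ)+1)) < sg (x₁ + ((n:ℝ)+1)) :=
        sg_strictAnti (Set.mem_Ioi.2 hp1) (Set.mem_Ioi.2 hp2) (by linarith)
      have e1 : x₁ + ((n:ℝ)+1) + 1 = x₁ + (((n+1:ℕ):ℝ)+1) := by push_cast; ring
      have e2 : x₂ + ((n:ℝ)+1) + 1 = x₂ + (((n+1:ℕ):ℝ)+1) := by push_cast; ring
      rw [e1] at h1
      rw [e2] at h2
      linarith
  have harg1 : Tendsto (fun N : ℕ => x₁ + ((N:ℝ)+1)) atTop atTop := by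
    apply tendsto_atTop_add_const_left
    apply tendsto_atTop_add_const_right
    exact tendsto_natCast_atTop_atTop
  have harg2 : Tendsto (fun N : ℕ => x₂ + ((N:ℝ)+1)) atTop atTop := by
    apply tendsto_atTop_add_const_left
    apply tendsto_atTop_add_const_right
    exact tendsto_natCast_atTop_atTop
  have hlim : Tendsto (fun N : ℕ =>
      (sg x₁ - sg x₂) + (stirlingH (x₁ + ((N:ℝ)+1)) - stirlingH (x₂ + ((N:ℝ)+1))))
      atTop (nhds ((sg x₁ - sg x₂) + (0 - 0))) :=
    tendsto_const_nhds.add ((stirlingH_tendsto.comp harg1).sub (stirlingH_tendsto.comp harg2))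
  have hle : (sg x₁ - sg x₂) + (0 - 0) ≤ stirlingH x₁ - stirlingH x₂ :=
    le_of_tendsto hlim (Filter.Eventually.of_forall hiter)
  have hsg : sg x₂ < sg x₁ :=
    sg_strictAnti (Set.mem_Ioi.2 hx₁) (Set.mem_Ioi.2 hx₂) hlt
  simp only [sub_zero, add_zero] at hle
  linarith
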